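/- Let c, c₃, c₄ ∈ ℝ with c/ (c₃ t + c₄) > 0 on an interval I. Then the curve x(t) = c₁ (constant), y(t) = √(c/(c₃t + c₄)), z(t) = c₃ (constant), together with control u(t) = 0 and costate p(t) = c₃ t + c₄, satisfies on I the system: p(t)(y(t)² + u(t)) = c, p(t) y(t) ẋ(t) = 0, ṗ(t) = z(t), u(t) = ½ p(t) ẋ(t), and ż(t) = ½ (y(t)² + u(t)) ẋ(t). -/

import Mathlib

theorem Real.mul_sq_sqrt_div {a b : ℝ} (h : 0 < a / b) : b * √(a / b) ^ 2 = a := by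
  rw [Real.sq_sqrt h.le, mul_div_cancel₀ a (div_ne_zero_iff.mp h.ne').2]

theorem deriv_const_mul_add_const (a b t : ℝ) : deriv (fun s => a * s + b) t = a :=
  ((hasDerivAt_id t).const_mul a |>.add_const b).deriv.trans (mul_one a)

/-- The explicit extremal x = c₁, y = √(c/(c₃t+c₄)), z = c₃, u = 0,
p = c₃t + c₄ of the Martinet optimal control problem satisfies the
extremality system on I. -/
theorem stmt_11 (c c₁ c₃ c₄ : ℝ) (I : Set ℝ)
    (hpos : ∀ t ∈ I, 0 < c / (c₃ * t + c₄)) :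
    let x : ℝ → ℝ := fun _ => c₁
    let y : ℝ → ℝ := fun t => Real.sqrt (c / (c₃ * t + c₄))
    let z : ℝ → ℝ := fun _ => c₃
    let u : ℝ → ℝ := fun _ => 0
    let p : ℝ → ℝ := fun t => c₃ * t + c₄
    ∀ t ∈ I,
      p t * (y t ^ 2 + u t) = c
        ∧ p t * y t * deriv x t = 0
        ∧ deriv p t = z t
        ∧ u t = (1 / 2) * p t * deriv x t
        ∧ deriv z t = (1 / 2) * (y t ^ 2 + u t) * deriv x t := by
  intro x y z u p t ht
  have hx : deriv x t = 0 := deriv_const t c₁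
  have hz : deriv z t = 0 := deriv_const t c₃
  refine ⟨?_, ?_, deriv_const_mul_add_const c₃ c₄ t, ?_, ?_⟩
  · simpa [y, u, p] using Real.mul_sq_sqrt_div (hpos t ht)
  · rw [hx, mul_zero]
  · rw [hx, mul_zero]
  · rw [hx, hz, mul_zero]
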